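/- Let p(s) = sⁿ + p̂₁ s^{n−1} + ⋯ + p̂_n be a monic real polynomial. Let Φ ∈ ℝ^{n×n} be the companion-form matrix with Φ_{j,j+1} = 1 for 1 ≤ j ≤ n−1, last row (−p̂_n, −p̂_{n−1}, …, −p̂₁), and all other entries zero, and let Ψ = (1, 0, …, 0) ∈ ℝ^{1×n}. Then there exists a column vector G ∈ ℝⁿ such that every eigenvalue of Φ + G Ψ (over ℂ) has strictly negative real part, i.e., Φ + GΨ is Hurwitz. -/

import Mathlib

/-!
For a gain with entries `G i = -Q.coeff (n - 1 - i)`, `Q` monic of degree `n`, the first `n - 1`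
rows of `(Φ + G Ψ) v = μ v` force `v k = (divX^[n - k] Q)(μ) * v 0`, where `divX^[d] F` is the
polynomial part of `F / X ^ d`; in particular `v 0 ≠ 0`. The last row then reads
`(divX^[n] (Q * p))(μ) * v 0 = 0`. Taking `Q = (X ^ n * (X + 1) ^ n) /ₘ p`, the product `Q * p`
differs from `X ^ n * (X + 1) ^ n` by a remainder of degree `< n`, so
`divX^[n] (Q * p) = (X + 1) ^ n` and every eigenvalue is `-1`.
-/

open Matrix

/-- The companion-form matrix `Φ` of the monic polynomial
`p(s) = sⁿ + p̂₁ s^{n−1} + ⋯ + p̂_n`, where `phat i = p̂_{i+1}`: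
superdiagonal entries equal `1`, the last row is `(−p̂_n, −p̂_{n−1}, …, −p̂₁)`,
and all other entries vanish. -/
noncomputable def companionMat {n : ℕ} (phat : Fin n → ℝ) : Matrix (Fin n) (Fin n) ℝ :=
  Matrix.of fun i j : Fin n =>
    if (i : ℕ) = n - 1 then -phat ⟨n - 1 - (j : ℕ), by have := j.isLt; omega⟩
    else if (i : ℕ) + 1 = (j : ℕ) then 1 else 0

/-- The row vector `Ψ = (1, 0, …, 0)`. -/
noncomputable def rowPsi (n : ℕ) : Matrix (Fin 1) (Fin n) ℝ :=
  Matrix.of fun _ j => if (j : ℕ) = 0 then 1 else 0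

open Polynomial

theorem Matrix.exists_mulVec_eq_smul_of_mem_spectrum {K ι : Type*} [Field K] [Fintype ι]
    [DecidableEq ι] {M : Matrix ι ι K} {μ : K} (h : μ ∈ spectrum K M) :
    ∃ v ≠ 0, M *ᵥ v = μ • v := by
  rw [← Matrix.spectrum_toLin', ← Module.End.hasEigenvalue_iff_mem_spectrum] at h
  obtain ⟨v, hv⟩ := h.exists_hasEigenvector
  exact ⟨v, hv.2, by simpa using Module.End.mem_eigenspace_iff.mp hv.1⟩

namespace Polynomial

variable {R : Type*} [CommRing R]

theorem coeff_iterate_divX (p : R[X]) (d k : ℕ) : (divX^[d] p).coeff k = p.coeff (k + d) := by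
  induction d generalizing k with
  | zero => rfl
  | succ d ih => rw [Function.iterate_succ_apply', coeff_divX, ih, add_assoc, add_comm 1]

theorem X_mul_iterate_divX_succ_add_C (p : R[X]) (d : ℕ) :
    X * divX^[d + 1] p + C (p.coeff d) = divX^[d] p := by
  rw [Function.iterate_succ_apply', ← zero_add d, ← coeff_iterate_divX, zero_add,
    X_mul_divX_add]

theorem iterate_divX_add (p q : R[X]) (d : ℕ) :
    divX^[d] (p + q) = divX^[d] p + divX^[d] q := by
  ext k
  simp only [coeff_iterate_divX, coeff_add]

theorem iterate_divX_X_pow_mul (p : R[X]) (d : ℕ) : divX^[d] (X ^ d * p) = p := by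
  ext k
  rw [coeff_iterate_divX, mul_comm, coeff_mul_X_pow]

theorem iterate_divX_eq_zero_of_degree_lt {p : R[X]} {d : ℕ} (h : p.degree < d) :
    divX^[d] p = 0 := by
  ext k
  rw [coeff_iterate_divX, coeff_zero]
  exact coeff_eq_zero_of_degree_lt (h.trans_le (by exact_mod_cast Nat.le_add_left d k))

theorem iterate_divX_mul_X_pow_add_sum {n : ℕ} (q : R[X]) (a : Fin n → R) :
    divX^[n] (q * (X ^ n + ∑ i : Fin n, C (a i) * X ^ (i : ℕ))) =
      q + ∑ i : Fin n, C (a i) * divX^[n - i] q := by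
  ext k
  simp only [coeff_iterate_divX, mul_add, Finset.mul_sum, coeff_add, finsetSum_coeff,
    mul_left_comm q, coeff_C_mul, coeff_mul_X_pow']
  rw [if_pos le_add_self, Nat.add_sub_cancel]
  congr 1
  refine Finset.sum_congr rfl fun i _ => ?_
  rw [if_pos (by omega)]
  congr 2
  omega

theorem IsMonicOfDegree.iterate_divX {p : R[X]} {n : ℕ} (hp : IsMonicOfDegree p n) :
    divX^[n] p = 1 := by
  ext k
  rw [coeff_iterate_divX, coeff_one]
  rcases k with _ | k
  · simpa [← hp.natDegree_eq] using hp.monic.coeff_natDegree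
  · exact coeff_eq_zero_of_natDegree_lt (by rw [hp.natDegree_eq]; omega)

theorem IsMonicOfDegree.divByMonic {f g : R[X]} {m n : ℕ} (hf : IsMonicOfDegree f m)
    (hg : IsMonicOfDegree g n) (h : n ≤ m) : IsMonicOfDegree (f /ₘ g) (m - n) := by
  refine ⟨by rw [natDegree_divByMonic f hg.monic, hf.natDegree_eq, hg.natDegree_eq], ?_⟩
  nontriviality R
  have hdeg : g.degree ≤ f.degree := by
    rw [degree_eq_natDegree hg.ne_zero, degree_eq_natDegree hf.ne_zero, hg.natDegree_eq,
      hf.natDegree_eq]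
    exact_mod_cast h
  exact (leadingCoeff_divByMonic_of_monic hg.monic hdeg).trans hf.monic.leadingCoeff

theorem iterate_divX_divByMonic_mul [Nontrivial R] {p : R[X]} {n : ℕ}
    (hp : IsMonicOfDegree p n) (f : R[X]) : divX^[n] (f /ₘ p * p) = divX^[n] f := by
  have hrem : (f %ₘ p).degree < n :=
    (degree_modByMonic_lt f hp.monic).trans_le (hp.natDegree_eq ▸ degree_le_natDegree)
  conv_rhs => rw [← modByMonic_add_div f p]
  rw [iterate_divX_add, iterate_divX_eq_zero_of_degree_lt hrem, zero_add, mul_comm]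

end Polynomial

-- `phat j.rev = p̂_{n-j}` is the coefficient of `X ^ j` in `p`.
noncomputable def companionPoly {n : ℕ} (phat : Fin n → ℝ) : ℝ[X] :=
  X ^ n + ∑ j : Fin n, C (phat j.rev) * X ^ (j : ℕ)

theorem isMonicOfDegree_companionPoly {n : ℕ} (phat : Fin n → ℝ) :
    IsMonicOfDegree (companionPoly phat) n := by
  refine ⟨?_, monic_X_pow_add (degree_sum_fin_lt _)⟩
  rw [companionPoly, natDegree_add_eq_left_of_degree_lt, natDegree_X_pow]
  rw [degree_X_pow]
  exact degree_sum_fin_lt _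

noncomputable def observerPoly {n : ℕ} (phat : Fin n → ℝ) : ℝ[X] :=
  (X ^ n * (X + 1) ^ n) /ₘ companionPoly phat

theorem isMonicOfDegree_observerPoly {n : ℕ} (phat : Fin n → ℝ) :
    IsMonicOfDegree (observerPoly phat) n := by
  have h : IsMonicOfDegree (X ^ n * (X + 1) ^ n : ℝ[X]) (n + n) := by
    simpa using (isMonicOfDegree_X_pow (R := ℝ) n).mul ((isMonicOfDegree_X_add_one 1).pow n)
  have hq := h.divByMonic (isMonicOfDegree_companionPoly phat) le_add_self
  rwa [Nat.add_sub_cancel] at hq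

theorem iterate_divX_observerPoly_mul_companionPoly {n : ℕ} (phat : Fin n → ℝ) :
    divX^[n] (observerPoly phat * companionPoly phat) = (X + 1) ^ n := by
  rw [observerPoly, iterate_divX_divByMonic_mul (isMonicOfDegree_companionPoly phat),
    iterate_divX_X_pow_mul]

noncomputable def injectionGain (n : ℕ) (Q : ℝ[X]) : Matrix (Fin n) (Fin 1) ℝ :=
  of fun i _ => -Q.coeff i.rev

section ClosedLoop

variable {A : Type*} [CommRing A] [Algebra ℝ A] {m : ℕ}

theorem companionMat_map_mulVec_castSucc (phat : Fin (m + 1) → ℝ) (v : Fin (m + 1) → A)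
    (i : Fin m) : ((companionMat phat).map (algebraMap ℝ A) *ᵥ v) i.castSucc = v i.succ := by
  have hsucc (j : Fin (m + 1)) : (i : ℕ) + 1 = j ↔ i.succ = j := by simp [Fin.ext_iff]
  simp [mulVec, dotProduct, companionMat, i.isLt.ne, hsucc]

theorem companionMat_map_mulVec_last (phat : Fin (m + 1) → ℝ) (v : Fin (m + 1) → A) :
    ((companionMat phat).map (algebraMap ℝ A) *ᵥ v) (Fin.last m) =
      -∑ j, algebraMap ℝ A (phat j.rev) * v j := by
  simp [mulVec, dotProduct, companionMat, Fin.rev]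

theorem add_mul_rowPsi_map_mulVec {n : ℕ} (hn : 0 < n) (B : Matrix (Fin n) (Fin n) ℝ)
    (G : Matrix (Fin n) (Fin 1) ℝ) (v : Fin n → A) :
    (B + G * rowPsi n).map (algebraMap ℝ A) *ᵥ v =
      B.map (algebraMap ℝ A) *ᵥ v + fun i => algebraMap ℝ A (G i 0) * v ⟨0, hn⟩ := by
  rw [Matrix.map_add _ (map_add _), add_mulVec]
  congr 1
  ext i
  simp only [mulVec, dotProduct, map_apply, mul_apply, Fin.sum_univ_one, rowPsi, of_apply]
  rw [Finset.sum_eq_single ⟨0, hn⟩ (fun j _ hj => by simp [Fin.ext_iff.not.mp hj]) (by simp)]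
  simp

variable {phat : Fin (m + 1) → ℝ} {Q : ℝ[X]} {μ : A} {v : Fin (m + 1) → A}

theorem eq_aeval_iterate_divX_mul_of_mulVec_eq_smul (hQ : IsMonicOfDegree Q (m + 1))
    (hv : (companionMat phat + injectionGain (m + 1) Q * rowPsi (m + 1)).map (algebraMap ℝ A)
      *ᵥ v = μ • v) (k : Fin (m + 1)) :
    v k = aeval μ (divX^[m + 1 - k] Q) * v 0 := by
  induction k using Fin.induction with
  | zero => simp [hQ.iterate_divX]
  | succ i ih =>
    have hrow := congrFun hv i.castSucc
    rw [add_mul_rowPsi_map_mulVec m.succ_pos, Pi.add_apply, companionMat_map_mulVec_castSucc,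
      Pi.smul_apply, smul_eq_mul, ih, Fin.val_castSucc,
      show m + 1 - i = m - i + 1 by omega] at hrow
    rw [Fin.val_succ, show m + 1 - (i + 1) = m - i by omega,
      ← X_mul_iterate_divX_succ_add_C Q (m - i)]
    simp only [injectionGain, of_apply, Fin.val_rev, Fin.val_castSucc, Nat.reduceSubDiff,
      Fin.zero_eta, map_neg, map_add, map_mul, aeval_X, aeval_C] at hrow ⊢
    linear_combination hrow

theorem aeval_iterate_divX_mul_companionPoly_mul_eq_zero
    (hv : (companionMat phat + injectionGain (m + 1) Q * rowPsi (m + 1)).map (algebraMap ℝ A)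
      *ᵥ v = μ • v) (hcoord : ∀ k, v k = aeval μ (divX^[m + 1 - k] Q) * v 0) :
    aeval μ (divX^[m + 1] (Q * companionPoly phat)) * v 0 = 0 := by
  have hsum : ∑ j, algebraMap ℝ A (phat j.rev) * v j =
      (∑ j : Fin (m + 1), algebraMap ℝ A (phat j.rev) * aeval μ (divX^[m + 1 - j] Q)) *
        v 0 := by
    rw [Finset.sum_mul]
    exact Finset.sum_congr rfl fun j _ => by rw [hcoord j, mul_assoc]
  have hQ : aeval μ Q = μ * aeval μ (divX Q) + algebraMap ℝ A (Q.coeff 0) := by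
    conv_lhs => rw [← X_mul_divX_add Q]
    simp only [map_add, map_mul, aeval_X, aeval_C]
  have hlast := congrFun hv (Fin.last m)
  rw [add_mul_rowPsi_map_mulVec m.succ_pos, Pi.add_apply, companionMat_map_mulVec_last, hsum,
    Pi.smul_apply, smul_eq_mul, hcoord (Fin.last m), Fin.val_last,
    Nat.add_sub_cancel_left] at hlast
  rw [companionPoly, iterate_divX_mul_X_pow_add_sum, map_add, hQ]
  simp only [injectionGain, of_apply, Fin.rev_last, Fin.val_zero, Fin.zero_eta, map_neg,
    Function.iterate_one, map_sum, map_mul, aeval_C] at hlast ⊢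
  linear_combination -hlast

end ClosedLoop

theorem eq_neg_one_of_mem_spectrum_injectionGain_observerPoly {n : ℕ} {phat : Fin n → ℝ}
    {μ : ℂ} (hμ : μ ∈ spectrum ℂ
      ((companionMat phat + injectionGain n (observerPoly phat) * rowPsi n).map
        (algebraMap ℝ ℂ))) :
    μ = -1 := by
  obtain ⟨v, hv0, hv⟩ := Matrix.exists_mulVec_eq_smul_of_mem_spectrum hμ
  cases n with
  | zero => exact absurd (Subsingleton.elim v 0) hv0
  | succ m =>
    have hcoord :=
      eq_aeval_iterate_divX_mul_of_mulVec_eq_smul (isMonicOfDegree_observerPoly phat) hv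
    have hv0' : v 0 ≠ 0 := fun h => hv0 (funext fun k => by rw [hcoord k, h, mul_zero]; rfl)
    have h := aeval_iterate_divX_mul_companionPoly_mul_eq_zero hv hcoord
    rw [iterate_divX_observerPoly_mul_companionPoly, map_pow, map_add, aeval_X, map_one,
      mul_eq_zero, pow_eq_zero_iff m.succ_ne_zero] at h
    exact eq_neg_of_add_eq_zero_left (h.resolve_right hv0')

/-- There is an output-injection gain `G` making `Φ + G Ψ` Hurwitz, i.e. all of its
complex eigenvalues have strictly negative real part. -/
theorem exists_hurwitz_output_injection (n : ℕ) (phat : Fin n → ℝ) :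
    ∃ G : Matrix (Fin n) (Fin 1) ℝ,
      ∀ μ ∈ spectrum ℂ ((companionMat phat + G * rowPsi n).map (algebraMap ℝ ℂ)),
        μ.re < 0 :=
  ⟨injectionGain n (observerPoly phat), fun μ hμ => by
    rw [eq_neg_one_of_mem_spectrum_injectionGain_observerPoly hμ]
    norm_num⟩
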